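/- Assume (H0) and d₁, d₂, l > 0, let k be a natural number, and assume hypothesis (H3) at mode k: B_k − C_k > 0, −A_k² + 2·B_k + b₁₁² > 0 and (A_k² − 2·B_k − b₁₁²)² > 4·(B_k² − C_k²). Then 0 < ω_k⁻ < ω_k⁺ and the set of positive real roots of the quartic equation ω⁴ + (A_k² − 2·B_k − b₁₁²)·ω² + B_k² − C_k² = 0 is exactly {ω_k⁻, ω_k⁺}. -/

import Mathlib

/-! The quartic is a quadratic in `ω²`. By (H3) its discriminant and the sum of its roots are
positive, and so is their product `B_k² − C_k² = (B_k − C_k)(B_k + C_k)`, because `C_k > 0`: under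
(H0) the equilibrium `(u⋆, v⋆)` is positive, which makes `a₂₂` and `b₁₁` negative. Hence both roots
in `ω²` are positive and `ω_k^∓` are their square roots. -/

open Real

/-- Δ = M² − 4·K·(a·m + c·p)·(a·r₂ + c·d − c·r₀) with M = a·m + c·p + K·(a·r₂ + c·d). -/
noncomputable def Delta (r₀ r₂ K d a p c m : ℝ) : ℝ :=
  (a*m + c*p + K*(a*r₂ + c*d))^2 - 4*K*(a*m + c*p)*(a*r₂ + c*d - c*r₀)

/-- The positive equilibrium predator density v⋆. -/
noncomputable def vstar (r₀ r₂ K d a p c m : ℝ) : ℝ :=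
  (-(a*m + c*p + K*(a*r₂ + c*d)) + Real.sqrt (Delta r₀ r₂ K d a p c m)) / (2*K*(a*m + c*p))

/-- The positive equilibrium prey density u⋆ = (r₂ + m·v⋆)/c. -/
noncomputable def ustar (r₀ r₂ K d a p c m : ℝ) : ℝ := (r₂ + m * vstar r₀ r₂ K d a p c m) / c

/-- Linearization coefficient a₁₂. -/
noncomputable def a12 (r₀ r₂ K d a p c m : ℝ) : ℝ :=
  -K*r₀*ustar r₀ r₂ K d a p c m / (1 + K*vstar r₀ r₂ K d a p c m)^2 - p*ustar r₀ r₂ K d a p c m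

/-- Linearization coefficient a₂₁. -/
noncomputable def a21 (r₀ r₂ K d a p c m : ℝ) : ℝ := c * vstar r₀ r₂ K d a p c m

/-- Linearization coefficient a₂₂. -/
noncomputable def a22 (r₀ r₂ K d a p c m : ℝ) : ℝ := -m * vstar r₀ r₂ K d a p c m

/-- Linearization coefficient b₁₁. -/
noncomputable def b11 (r₀ r₂ K d a p c m : ℝ) : ℝ := -a * ustar r₀ r₂ K d a p c m

/-- A_k = (d₁ + d₂)·k²/l² − a₂₂. -/
noncomputable def Ak (r₀ r₂ K d a p c m d₁ d₂ l : ℝ) (k : ℕ) : ℝ :=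
  (d₁ + d₂)*(k:ℝ)^2/l^2 - a22 r₀ r₂ K d a p c m

/-- B_k = d₁·d₂·k⁴/l⁴ − a₂₂·d₁·k²/l² − a₁₂·a₂₁. -/
noncomputable def Bk (r₀ r₂ K d a p c m d₁ d₂ l : ℝ) (k : ℕ) : ℝ :=
  d₁*d₂*(k:ℝ)^4/l^4 - a22 r₀ r₂ K d a p c m * d₁*(k:ℝ)^2/l^2 - a12 r₀ r₂ K d a p c m * a21 r₀ r₂ K d a p c m

/-- C_k = −b₁₁·d₂·k²/l² + a₂₂·b₁₁. -/
noncomputable def Ck (r₀ r₂ K d a p c m d₁ d₂ l : ℝ) (k : ℕ) : ℝ :=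
  -(b11 r₀ r₂ K d a p c m)*d₂*(k:ℝ)^2/l^2 + a22 r₀ r₂ K d a p c m * b11 r₀ r₂ K d a p c m

/-- ω_k⁺. -/
noncomputable def omegaP (r₀ r₂ K d a p c m d₁ d₂ l : ℝ) (k : ℕ) : ℝ :=
  Real.sqrt ((-(Ak r₀ r₂ K d a p c m d₁ d₂ l k)^2 + 2*Bk r₀ r₂ K d a p c m d₁ d₂ l k + (b11 r₀ r₂ K d a p c m)^2
    + Real.sqrt (((Ak r₀ r₂ K d a p c m d₁ d₂ l k)^2 - 2*Bk r₀ r₂ K d a p c m d₁ d₂ l k - (b11 r₀ r₂ K d a p c m)^2)^2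
      - 4*((Bk r₀ r₂ K d a p c m d₁ d₂ l k)^2 - (Ck r₀ r₂ K d a p c m d₁ d₂ l k)^2))) / 2)

/-- ω_k⁻. -/
noncomputable def omegaM (r₀ r₂ K d a p c m d₁ d₂ l : ℝ) (k : ℕ) : ℝ :=
  Real.sqrt ((-(Ak r₀ r₂ K d a p c m d₁ d₂ l k)^2 + 2*Bk r₀ r₂ K d a p c m d₁ d₂ l k + (b11 r₀ r₂ K d a p c m)^2
    - Real.sqrt (((Ak r₀ r₂ K d a p c m d₁ d₂ l k)^2 - 2*Bk r₀ r₂ K d a p c m d₁ d₂ l k - (b11 r₀ r₂ K d a p c m)^2)^2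
      - 4*((Bk r₀ r₂ K d a p c m d₁ d₂ l k)^2 - (Ck r₀ r₂ K d a p c m d₁ d₂ l k)^2))) / 2)

/-- Hypothesis (H3) at mode k. -/
def H3 (r₀ r₂ K d a p c m d₁ d₂ l : ℝ) (k : ℕ) : Prop :=
  Bk r₀ r₂ K d a p c m d₁ d₂ l k - Ck r₀ r₂ K d a p c m d₁ d₂ l k > 0 ∧ -(Ak r₀ r₂ K d a p c m d₁ d₂ l k)^2 + 2*Bk r₀ r₂ K d a p c m d₁ d₂ l k + (b11 r₀ r₂ K d a p c m)^2 > 0 ∧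
    ((Ak r₀ r₂ K d a p c m d₁ d₂ l k)^2 - 2*Bk r₀ r₂ K d a p c m d₁ d₂ l k - (b11 r₀ r₂ K d a p c m)^2)^2 > 4*((Bk r₀ r₂ K d a p c m d₁ d₂ l k)^2 - (Ck r₀ r₂ K d a p c m d₁ d₂ l k)^2)

theorem sqrt_discrim_lt_neg {s q : ℝ} (hs : s < 0) (hq : 0 < q) : √(s ^ 2 - 4 * q) < -s :=
  (Real.sqrt_lt' (by linarith)).mpr (by nlinarith)

theorem biquadratic_pos_roots {s q : ℝ} (hs : s < 0) (hq : 0 < q) (hdisc : 4 * q < s ^ 2) :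
    0 < √((-s - √(s ^ 2 - 4 * q)) / 2) ∧
      √((-s - √(s ^ 2 - 4 * q)) / 2) < √((-s + √(s ^ 2 - 4 * q)) / 2) ∧
      {ω : ℝ | 0 < ω ∧ ω ^ 4 + s * ω ^ 2 + q = 0} =
        {√((-s - √(s ^ 2 - 4 * q)) / 2), √((-s + √(s ^ 2 - 4 * q)) / 2)} := by
  set r := √(s ^ 2 - 4 * q) with hr
  have hr_pos : 0 < r := Real.sqrt_pos.mpr (by linarith)
  have hr_lt : r < -s := sqrt_discrim_lt_neg hs hq
  have hy_minus : 0 < (-s - r) / 2 := by linarith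
  have hdiscrim : discrim 1 s q = r * r := by
    rw [hr, Real.mul_self_sqrt (by linarith), discrim]; ring
  have hroots (ω : ℝ) : ω ^ 4 + s * ω ^ 2 + q = 0 ↔ ω ^ 2 = (-s + r) / 2 ∨ ω ^ 2 = (-s - r) / 2 := by
    rw [← mul_one (2 : ℝ), ← quadratic_eq_zero_iff one_ne_zero hdiscrim (ω ^ 2)]
    ring_nf
  refine ⟨Real.sqrt_pos.mpr hy_minus, Real.sqrt_lt_sqrt hy_minus.le (by linarith), ?_⟩
  ext ω
  simp only [Set.mem_ofPred_eq, Set.mem_insert_iff, Set.mem_singleton_iff, hroots]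
  constructor
  · rintro ⟨hω, h | h⟩
    · exact Or.inr ((Real.sqrt_eq_iff_eq_sq (by linarith) hω.le).mpr h.symm).symm
    · exact Or.inl ((Real.sqrt_eq_iff_eq_sq (by linarith) hω.le).mpr h.symm).symm
  · rintro (rfl | rfl)
    · exact ⟨Real.sqrt_pos.mpr hy_minus, Or.inr (Real.sq_sqrt hy_minus.le)⟩
    · exact ⟨Real.sqrt_pos.mpr (by linarith), Or.inl (Real.sq_sqrt (by linarith))⟩

section Equilibrium

variable {r₀ r₂ K d a p c m : ℝ}

-- `v⋆` is the larger root of `K(am + cp)v² + Mv + (ar₂ + cd − cr₀)`, whose constant term is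
-- negative by (H0); hence `√Δ > M`.
theorem vstar_pos (hK : 0 < K) (ha : 0 < a) (hp : 0 < p) (hc : 0 < c) (hm : 0 < m)
    (hH0 : a * r₂ + c * d - c * r₀ < 0) : 0 < vstar r₀ r₂ K d a p c m := by
  have hamcp : 0 < a * m + c * p := by positivity
  have hM_lt : a * m + c * p + K * (a * r₂ + c * d) < √(Delta r₀ r₂ K d a p c m) := by
    refine Real.lt_sqrt_of_sq_lt ?_
    have := mul_pos (mul_pos hK hamcp) (neg_pos.mpr hH0)
    unfold Delta; nlinarith
  unfold vstar
  exact div_pos (by linarith) (by positivity)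

theorem ustar_pos (hr₂ : 0 < r₂) (hK : 0 < K) (ha : 0 < a) (hp : 0 < p) (hc : 0 < c) (hm : 0 < m)
    (hH0 : a * r₂ + c * d - c * r₀ < 0) : 0 < ustar r₀ r₂ K d a p c m := by
  have := vstar_pos hK ha hp hc hm hH0
  unfold ustar
  positivity

theorem a22_neg (hK : 0 < K) (ha : 0 < a) (hp : 0 < p) (hc : 0 < c) (hm : 0 < m)
    (hH0 : a * r₂ + c * d - c * r₀ < 0) : a22 r₀ r₂ K d a p c m < 0 := by
  have := vstar_pos hK ha hp hc hm hH0
  unfold a22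
  nlinarith

theorem b11_neg (hr₂ : 0 < r₂) (hK : 0 < K) (ha : 0 < a) (hp : 0 < p) (hc : 0 < c) (hm : 0 < m)
    (hH0 : a * r₂ + c * d - c * r₀ < 0) : b11 r₀ r₂ K d a p c m < 0 := by
  have := ustar_pos hr₂ hK ha hp hc hm hH0
  unfold b11
  nlinarith

theorem Ck_pos {d₁ d₂ l : ℝ} (k : ℕ) (hr₂ : 0 < r₂) (hK : 0 < K) (ha : 0 < a) (hp : 0 < p) (hc : 0 < c)
    (hm : 0 < m) (hd₂ : 0 < d₂) (hH0 : a * r₂ + c * d - c * r₀ < 0) :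
    0 < Ck r₀ r₂ K d a p c m d₁ d₂ l k := by
  have hb := b11_neg hr₂ hK ha hp hc hm hH0
  have ha22 := a22_neg hK ha hp hc hm hH0
  have hdiffusion : 0 ≤ -b11 r₀ r₂ K d a p c m * d₂ * (k : ℝ) ^ 2 / l ^ 2 := by
    have := neg_pos.mpr hb
    positivity
  unfold Ck
  linarith [mul_pos_of_neg_of_neg ha22 hb]

end Equilibrium

theorem stmt12_general (r₀ r₂ K d a p c m d₁ d₂ l : ℝ) (hr₂ : 0 < r₂) (hK : 0 < K) (ha : 0 < a) (hp : 0 < p) (hc : 0 < c) (hm : 0 < m)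
    (hd₂ : 0 < d₂)
    (hH0 : a*r₂ + c*d - c*r₀ < 0) (k : ℕ) (hH3 : H3 r₀ r₂ K d a p c m d₁ d₂ l k) :
    0 < omegaM r₀ r₂ K d a p c m d₁ d₂ l k ∧ omegaM r₀ r₂ K d a p c m d₁ d₂ l k < omegaP r₀ r₂ K d a p c m d₁ d₂ l k ∧
    {ω : ℝ | 0 < ω ∧
      ω^4 + ((Ak r₀ r₂ K d a p c m d₁ d₂ l k)^2 - 2*Bk r₀ r₂ K d a p c m d₁ d₂ l k - (b11 r₀ r₂ K d a p c m)^2)*ω^2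
        + (Bk r₀ r₂ K d a p c m d₁ d₂ l k)^2 - (Ck r₀ r₂ K d a p c m d₁ d₂ l k)^2 = 0}
      = {omegaM r₀ r₂ K d a p c m d₁ d₂ l k, omegaP r₀ r₂ K d a p c m d₁ d₂ l k} := by
  obtain ⟨hBC, hs, hdisc⟩ := hH3
  unfold omegaM omegaP
  set A := Ak r₀ r₂ K d a p c m d₁ d₂ l k
  set B := Bk r₀ r₂ K d a p c m d₁ d₂ l k
  set C := Ck r₀ r₂ K d a p c m d₁ d₂ l k
  set b := b11 r₀ r₂ K d a p c m
  have hC : 0 < C := Ck_pos k hr₂ hK ha hp hc hm hd₂ hH0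
  have hq : 0 < B ^ 2 - C ^ 2 := by nlinarith
  rw [show -A ^ 2 + 2 * B + b ^ 2 = -(A ^ 2 - 2 * B - b ^ 2) by ring]
  simpa only [add_sub_assoc] using biquadratic_pos_roots (by linarith) hq (by linarith)

theorem stmt12 (r₀ r₂ K d a p c m d₁ d₂ l : ℝ) (hr₀ : 0 < r₀) (hr₂ : 0 < r₂) (hK : 0 < K) (hd : 0 < d) (ha : 0 < a) (hp : 0 < p) (hc : 0 < c) (hm : 0 < m)
    (hd₁ : 0 < d₁) (hd₂ : 0 < d₂) (hl : 0 < l)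
    (hH0 : a*r₂ + c*d - c*r₀ < 0) (k : ℕ) (hH3 : H3 r₀ r₂ K d a p c m d₁ d₂ l k) :
    0 < omegaM r₀ r₂ K d a p c m d₁ d₂ l k ∧ omegaM r₀ r₂ K d a p c m d₁ d₂ l k < omegaP r₀ r₂ K d a p c m d₁ d₂ l k ∧
    {ω : ℝ | 0 < ω ∧
      ω^4 + ((Ak r₀ r₂ K d a p c m d₁ d₂ l k)^2 - 2*Bk r₀ r₂ K d a p c m d₁ d₂ l k - (b11 r₀ r₂ K d a p c m)^2)*ω^2
        + (Bk r₀ r₂ K d a p c m d₁ d₂ l k)^2 - (Ck r₀ r₂ K d a p c m d₁ d₂ l k)^2 = 0}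
      = {omegaM r₀ r₂ K d a p c m d₁ d₂ l k, omegaP r₀ r₂ K d a p c m d₁ d₂ l k} :=
  stmt12_general r₀ r₂ K d a p c m d₁ d₂ l hr₂ hK ha hp hc hm hd₂ hH0 k hH3
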